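/- Let s, m, n, t be integers with s ≥ 1 and n ≥ m ≥ t ≥ 0, and let C_1, …, C_s ∈ 𝔽₂^{n×m} be generating matrices of a digital (t, m, s)-net in base 2: for every choice of nonnegative integers d_1, …, d_s with d_1 + ⋯ + d_s = m − t and every choice of integers a_1, …, a_s with 0 ≤ a_i < 2^{d_i}, the number of h ∈ 𝔽₂^m with x_h ∈ Π_{i=1}^s [a_i·2^{−d_i}, (a_i+1)·2^{−d_i}) is exactly 2^t. Then for any invertible lower triangular matrices L_1, …, L_s ∈ 𝔽₂^{n×n}, the digital net with generating matrices L_1·C_1, …, L_s·C_s is also a (t, m, s)-net: for every such choice of d_1, …, d_s and a_1, …, a_s, the number of h ∈ 𝔽₂^m whose scrambled point (with i-th coordinate Σ_{j=1}^n (L_i C_i h)_j · 2^{−j}) lies in Π_{i=1}^s [a_i·2^{−d_i}, (a_i+1)·2^{−d_i}) is exactly 2^t. -/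

import Mathlib

/-!
A point lies in `[a 2^{-d}, (a+1) 2^{-d})` exactly when its first `d` binary digits spell `a`.
A lower triangular `L` acts on the first `d` digits of a vector through its leading `d × d`
block, which is again invertible. Hence the points of the scrambled net in an elementary interval
are exactly the points of the original net in another elementary interval of the same shape, and
there are `2^t` of them.
-/

open scoped Classical

/-- The number of parameter vectors `h ∈ 𝔽₂^m` whose digital net point (generated by the
matrices `C i`, with `i`-th coordinate `Σ_{j=1}^n (C_i h)_j 2^{−j}`; a column index `j : Fin n`
corresponds to the paper's `j.val + 1`) lies in the elementary interval
`Π_i [a_i 2^{−d_i}, (a_i+1) 2^{−d_i})`. -/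
noncomputable def digitalNetIntervalCount (s m n : ℕ)
    (C : Fin s → Matrix (Fin n) (Fin m) (ZMod 2))
    (d : Fin s → ℕ) (a : Fin s → ℕ) : ℕ :=
  (Finset.univ.filter fun h : Fin m → ZMod 2 =>
    ∀ i : Fin s,
      (a i : ℝ) * (2 : ℝ) ^ (-(d i : ℤ)) ≤
          ∑ j : Fin n, ((Matrix.mulVec (C i) h) j).val * (2 : ℝ) ^ (-((j : ℕ) + 1 : ℤ)) ∧
        ∑ j : Fin n, ((Matrix.mulVec (C i) h) j).val * (2 : ℝ) ^ (-((j : ℕ) + 1 : ℤ)) <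
          ((a i : ℝ) + 1) * (2 : ℝ) ^ (-(d i : ℤ))).card

open Finset
open scoped Matrix

namespace Matrix

theorem IsLowerTriangular.submatrix_of_strictMono {m n R : Type*} [LinearOrder m]
    [LinearOrder n] [Zero R] {L : Matrix n n R} (hL : L.IsLowerTriangular) {f : m → n}
    (hf : StrictMono f) : (L.submatrix f f).IsLowerTriangular :=
  fun _ _ hij => hL (hf hij)

theorem IsLowerTriangular.isUnit_submatrix {m n R : Type*} [Fintype m] [Fintype n]
    [LinearOrder m] [LinearOrder n] [DecidableEq m] [DecidableEq n] [CommRing R]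
    {L : Matrix n n R} (hL : L.IsLowerTriangular) (hU : IsUnit L) {f : m → n}
    (hf : StrictMono f) : IsUnit (L.submatrix f f) := by
  rw [isUnit_iff_isUnit_det, det_of_isLowerTriangular _ hL, IsUnit.prod_univ_iff] at hU
  rw [isUnit_iff_isUnit_det, det_of_isLowerTriangular _ (hL.submatrix_of_strictMono hf),
    IsUnit.prod_univ_iff]
  exact fun i => hU (f i)

theorem IsLowerTriangular.mulVec_castLE {n d : ℕ} {R : Type*} [NonUnitalNonAssocSemiring R]
    {L : Matrix (Fin n) (Fin n) R} (hL : L.IsLowerTriangular) (hd : d ≤ n) (y : Fin n → R) :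
    (fun j => (L *ᵥ y) (Fin.castLE hd j)) =
      L.submatrix (Fin.castLE hd) (Fin.castLE hd) *ᵥ fun j => y (Fin.castLE hd j) := by
  obtain ⟨k, rfl⟩ := Nat.exists_eq_add_of_le hd
  ext j
  have hupper (i : Fin k) : L (Fin.castLE hd j) (Fin.natAdd d i) = 0 :=
    hL (show Fin.castLE hd j < Fin.natAdd d i from Fin.lt_def.mpr (Nat.lt_add_right _ j.isLt))
  simp only [mulVec, dotProduct, Fin.sum_univ_add, hupper, zero_mul, sum_const_zero, add_zero]
  rfl

end Matrix

def dyadicInterval (d a : ℕ) : Set ℝ :=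
  Set.Ico ((a : ℝ) * 2 ^ (-(d : ℤ))) (((a : ℝ) + 1) * 2 ^ (-(d : ℤ)))

noncomputable def digitalCoord {n : ℕ} (v : Fin n → ZMod 2) : ℝ :=
  ∑ j : Fin n, ((v j).val : ℝ) * (2 : ℝ) ^ (-((j : ℕ) + 1 : ℤ))

/-- Most significant digit first: `p 0` has weight `2 ^ (d - 1)`. -/
def binaryValue (d : ℕ) : (Fin d → ZMod 2) ≃ Fin (2 ^ d) :=
  (Equiv.arrowCongr Fin.revPerm (Equiv.refl (ZMod 2))).trans finFunctionFinEquiv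

theorem binaryValue_eq {d : ℕ} (p : Fin d → ZMod 2) :
    (binaryValue d p : ℝ) = 2 ^ d * digitalCoord p := by
  change ((∑ i : Fin d, (p (Fin.rev i)).val * 2 ^ (i : ℕ) : ℕ) : ℝ) = _
  rw [digitalCoord, mul_sum]
  push_cast
  refine Fintype.sum_equiv Fin.revPerm _ _ fun i => ?_
  have hi := i.isLt
  rw [Fin.revPerm_apply, Fin.val_rev, mul_left_comm, ← zpow_natCast, ← zpow_natCast,
    ← zpow_add₀ two_ne_zero]
  congr 2
  omega

theorem digitalCoord_nonneg {n : ℕ} (v : Fin n → ZMod 2) : 0 ≤ digitalCoord v :=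
  sum_nonneg fun _ _ => by positivity

theorem digitalCoord_lt_one {n : ℕ} (v : Fin n → ZMod 2) : digitalCoord v < 1 := by
  have hval := binaryValue_eq v
  have hlt : (binaryValue n v : ℝ) < 2 ^ n := by exact_mod_cast (binaryValue n v).isLt
  nlinarith [pow_pos (two_pos : (0 : ℝ) < 2) n]

theorem digitalCoord_append {d k : ℕ} (v : Fin (d + k) → ZMod 2) :
    digitalCoord v = digitalCoord (fun i => v (Fin.castAdd k i))
      + 2 ^ (-(d : ℤ)) * digitalCoord (fun i => v (Fin.natAdd d i)) := by
  rw [digitalCoord, Fin.sum_univ_add, digitalCoord, digitalCoord, mul_sum]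
  congr 1
  refine sum_congr rfl fun i _ => ?_
  rw [mul_left_comm, ← zpow_add₀ two_ne_zero, Fin.val_natAdd]
  push_cast
  ring_nf

theorem digitalCoord_mem_dyadicInterval_iff {n d : ℕ} (hd : d ≤ n) (v : Fin n → ZMod 2)
    (a : ℕ) :
    digitalCoord v ∈ dyadicInterval d a ↔
      (binaryValue d (fun j => v (Fin.castLE hd j)) : ℕ) = a := by
  obtain ⟨k, rfl⟩ := Nat.exists_eq_add_of_le hd
  set V := (binaryValue d (fun j => v (Fin.castLE hd j)) : ℕ)
  have hV : (V : ℝ) = 2 ^ d * digitalCoord (fun i => v (Fin.castAdd k i)) := binaryValue_eq _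
  set r := digitalCoord (fun i => v (Fin.natAdd d i))
  have hr₀ : 0 ≤ r := digitalCoord_nonneg _
  have hr₁ : r < 1 := digitalCoord_lt_one _
  have hsplit : digitalCoord v = (V + r) * 2 ^ (-(d : ℤ)) := by
    rw [digitalCoord_append, hV, zpow_neg, zpow_natCast]
    field_simp
    ring
  have hpos : (0 : ℝ) < 2 ^ (-(d : ℤ)) := by positivity
  rw [dyadicInterval, hsplit, Set.mem_Ico, mul_le_mul_iff_of_pos_right hpos,
    mul_lt_mul_iff_of_pos_right hpos]
  constructor
  · rintro ⟨hlo, hhi⟩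
    have : (a : ℝ) < V + 1 := by linarith
    have : (V : ℝ) < a + 1 := by linarith
    norm_cast at *
    omega
  · rintro rfl
    constructor <;> linarith

theorem exists_digitalCoord_mulVec_mem_dyadicInterval_iff {n d : ℕ} (hd : d ≤ n)
    {L : Matrix (Fin n) (Fin n) (ZMod 2)} (hL : L.IsLowerTriangular) (hU : IsUnit L)
    {a : ℕ} (ha : a < 2 ^ d) :
    ∃ a' : ℕ, a' < 2 ^ d ∧ ∀ y : Fin n → ZMod 2,
      digitalCoord (L *ᵥ y) ∈ dyadicInterval d a ↔ digitalCoord y ∈ dyadicInterval d a' := by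
  set M := L.submatrix (Fin.castLE hd) (Fin.castLE hd)
  have hM : IsUnit M := hL.isUnit_submatrix hU (Fin.strictMono_castLE hd)
  let e : (Fin d → ZMod 2) ≃ (Fin d → ZMod 2) := Equiv.ofBijective M.mulVec
    ⟨Matrix.mulVec_injective_iff_isUnit.mpr hM, Matrix.mulVec_surjective_iff_isUnit.mpr hM⟩
  set A : Fin (2 ^ d) := ⟨a, ha⟩
  set A' := binaryValue d (e.symm ((binaryValue d).symm A))
  refine ⟨A', A'.isLt, fun y => ?_⟩
  rw [digitalCoord_mem_dyadicInterval_iff hd, digitalCoord_mem_dyadicInterval_iff hd,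
    hL.mulVec_castLE hd, ← Fin.val_mk ha, Fin.val_inj, Fin.val_inj, Equiv.apply_eq_iff_eq,
    ← Equiv.eq_symm_apply]
  exact e.eq_symm_apply.symm

theorem linear_scrambling_preserves_net_general (s m n t : ℕ)
    (hmn : m ≤ n)
    (C : Fin s → Matrix (Fin n) (Fin m) (ZMod 2))
    (hC : ∀ d : Fin s → ℕ, ∀ a : Fin s → ℕ, (∑ i, d i) = m - t → (∀ i, a i < 2 ^ d i) →
      digitalNetIntervalCount s m n C d a = 2 ^ t)
    (L : Fin s → Matrix (Fin n) (Fin n) (ZMod 2))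
    (hL : ∀ i, IsUnit (L i))
    (hlow : ∀ i, ∀ a b : Fin n, a < b → L i a b = 0) :
    ∀ d : Fin s → ℕ, ∀ a : Fin s → ℕ, (∑ i, d i) = m - t → (∀ i, a i < 2 ^ d i) →
      digitalNetIntervalCount s m n (fun i => L i * C i) d a = 2 ^ t := by
  intro d a hd ha
  have hdn (i : Fin s) : d i ≤ n := by
    have := single_le_sum (fun j _ => Nat.zero_le (d j)) (mem_univ i)
    omega
  choose a' ha' hiff using fun i =>
    exists_digitalCoord_mulVec_mem_dyadicInterval_iff (hdn i) (fun _ _ hab => hlow i _ _ hab)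
      (hL i) (ha i)
  rw [← hC d a' hd ha', digitalNetIntervalCount, digitalNetIntervalCount]
  congr 1
  refine filter_congr fun h _ => forall_congr' fun i => ?_
  rw [← Matrix.mulVec_mulVec]
  exact hiff i (C i *ᵥ h)

/-- Linear scrambling by invertible lower triangular matrices preserves the digital
`(t,m,s)`-net property: if every elementary interval of volume `2^{t−m}` contains exactly
`2^t` points of the digital net generated by `C 1, …, C s`, then the same holds for the
digital net generated by `L 1 * C 1, …, L s * C s`. -/
theorem linear_scrambling_preserves_net (s m n t : ℕ)
    (hs : 1 ≤ s) (hmn : m ≤ n) (htm : t ≤ m)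
    (C : Fin s → Matrix (Fin n) (Fin m) (ZMod 2))
    (hC : ∀ d : Fin s → ℕ, ∀ a : Fin s → ℕ, (∑ i, d i) = m - t → (∀ i, a i < 2 ^ d i) →
      digitalNetIntervalCount s m n C d a = 2 ^ t)
    (L : Fin s → Matrix (Fin n) (Fin n) (ZMod 2))
    (hL : ∀ i, IsUnit (L i))
    (hlow : ∀ i, ∀ a b : Fin n, a < b → L i a b = 0) :
    ∀ d : Fin s → ℕ, ∀ a : Fin s → ℕ, (∑ i, d i) = m - t → (∀ i, a i < 2 ^ d i) →
      digitalNetIntervalCount s m n (fun i => L i * C i) d a = 2 ^ t :=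
  linear_scrambling_preserves_net_general s m n t hmn C hC L hL hlow
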